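/- Let (T, D(T)) be a closed antisymmetric densely defined operator on a Hilbert space H and P an orthogonal projection with P(D) ⊂ D(T) for a dense subspace D ⊂ D(T), and assume PTP = 0 on D. With B = (I + (TP)*TP)^{-1}(TP)* on D((TP)*), the operator TB is defined on D and satisfies ‖TBf‖ ≤ ‖(I − P)f‖ for all f ∈ D. -/

import Mathlib

/-!
Write `S = TP` and `v = S(Bf)`. Pairing the defining equation `Bf + S*S(Bf) = S*f` with `Bf`
gives `‖Bf‖² + ‖v‖² = ⟪v, f⟫`, so `‖v‖² ≤ ⟪v, f⟫`. Antisymmetry of `T` and `PTP = 0` make `v`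
orthogonal to `Pf`, hence `‖v‖² ≤ ⟪v, (I - P)f⟫ ≤ ‖v‖ ‖(I - P)f‖`.
-/

open LinearPMap

/-- The composition `T ∘ L` of an unbounded operator `T` with an everywhere-defined bounded
operator `L`, with domain `{f | L f ∈ D(T)}`. -/
noncomputable def pmapCompCLM {H : Type*} [NormedAddCommGroup H] [InnerProductSpace ℝ H]
    (T : H →ₗ.[ℝ] H) (L : H →L[ℝ] H) : H →ₗ.[ℝ] H where
  domain := T.domain.comap (L : H →ₗ[ℝ] H)
  toFun :=
    { toFun := fun f => T ⟨L f.1, f.2⟩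
      map_add' := fun x y => by
        have h : (⟨L (x + y).1, (x + y).2⟩ : T.domain)
            = ⟨L x.1, x.2⟩ + ⟨L y.1, y.2⟩ := Subtype.ext (by simp)
        show T ⟨L (x + y).1, (x + y).2⟩ = T ⟨L x.1, x.2⟩ + T ⟨L y.1, y.2⟩
        rw [h, T.map_add]
      map_smul' := fun c x => by
        have h : (⟨L (c • x).1, (c • x).2⟩ : T.domain)
            = c • (⟨L x.1, x.2⟩ : T.domain) := Subtype.ext (by simp)
        show T ⟨L (c • x).1, (c • x).2⟩ = c • T ⟨L x.1, x.2⟩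
        rw [h, T.map_smul] }

open RealInnerProductSpace

theorem norm_le_of_sq_le_inner {E : Type*} [NormedAddCommGroup E] [InnerProductSpace ℝ E]
    {v w : E} (h : ‖v‖ ^ 2 ≤ ⟪v, w⟫) : ‖v‖ ≤ ‖w‖ := by
  have hcs : ‖v‖ ^ 2 ≤ ‖v‖ * ‖w‖ := h.trans (real_inner_le_norm v w)
  nlinarith [norm_nonneg v, norm_nonneg w]

namespace LinearPMap

variable {E F : Type*} [NormedAddCommGroup E] [InnerProductSpace ℝ E] [CompleteSpace E]
  [NormedAddCommGroup F] [InnerProductSpace ℝ F]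

theorem norm_sq_add_norm_sq_eq_inner_of_add_adjoint_eq {S : E →ₗ.[ℝ] F}
    (hS : Dense (S.domain : Set E)) {u : S†.domain} {b : S.domain} (hb : S b ∈ S†.domain)
    (h : (b : E) + S† ⟨S b, hb⟩ = S† u) : ‖S b‖ ^ 2 + ‖(b : E)‖ ^ 2 = ⟪S b, (u : F)⟫ := by
  have hpair := congrArg (⟪·, (b : E)⟫) h
  simp only [inner_add_left, adjoint_isFormalAdjoint hS _ b] at hpair
  rw [real_inner_self_eq_norm_sq, real_inner_self_eq_norm_sq, real_inner_comm] at hpair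
  linarith

end LinearPMap

section pmapCompCLM

variable {H : Type*} [NormedAddCommGroup H] [InnerProductSpace ℝ H]
  {T : H →ₗ.[ℝ] H} {P : H →L[ℝ] H}

theorem pmapCompCLM_apply (x : (pmapCompCLM T P).domain) :
    pmapCompCLM T P x = T ⟨P x, x.2⟩ :=
  rfl

variable (hanti : ∀ f g : T.domain, ⟪T f, (g : H)⟫ = -⟪(f : H), T g⟫)
  (hPsym : ∀ x y : H, ⟪P x, y⟫ = ⟪x, P y⟫)
include hanti hPsym

/-- For `f ∈ D(T)`, `(TP)* f = -PTf`. -/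
theorem mem_adjoint_domain_pmapCompCLM [CompleteSpace H] {f : H} (hf : f ∈ T.domain) :
    f ∈ (pmapCompCLM T P)†.domain := by
  refine mem_adjoint_domain_of_exists f ⟨-P (T ⟨f, hf⟩), fun x => ?_⟩
  rw [pmapCompCLM_apply, inner_neg_left, hPsym, hanti ⟨f, hf⟩ ⟨P x, x.2⟩, neg_neg]

theorem inner_pmapCompCLM_eq_zero {g : H} (hg : P g ∈ T.domain) (hPTP : P (T ⟨P g, hg⟩) = 0)
    (x : (pmapCompCLM T P).domain) : ⟪pmapCompCLM T P x, P g⟫ = 0 := by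
  rw [pmapCompCLM_apply, hanti ⟨P x, x.2⟩ ⟨P g, hg⟩, hPsym, hPTP, inner_zero_right, neg_zero]

end pmapCompCLM

theorem stmt5_general {H : Type*} [NormedAddCommGroup H] [InnerProductSpace ℝ H] [CompleteSpace H]
    (T : H →ₗ.[ℝ] H)
    (hanti : ∀ f g : T.domain, ⟪T f, (g : H)⟫ = -⟪(f : H), T g⟫)
    (P : H →L[ℝ] H)
    (hPsym : ∀ x y : H, ⟪P x, y⟫ = ⟪x, P y⟫)
    (D : Submodule ℝ H) (hDT : D ≤ T.domain) (hDdense : Dense (D : Set H))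
    (hPD : ∀ f (hf : f ∈ D), P f ∈ T.domain)
    (hPTP : ∀ f (hf : f ∈ D), P (T ⟨P f, hPD f hf⟩) = 0)
    (B : H → H)
    (hB : ∀ f (hf : f ∈ (pmapCompCLM T P).adjoint.domain),
      ∃ (h1 : B f ∈ (pmapCompCLM T P).domain)
        (h2 : (pmapCompCLM T P) ⟨B f, h1⟩ ∈ (pmapCompCLM T P).adjoint.domain),
        B f + (pmapCompCLM T P).adjoint ⟨(pmapCompCLM T P) ⟨B f, h1⟩, h2⟩
          = (pmapCompCLM T P).adjoint ⟨f, hf⟩) :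
    ∀ f, f ∈ D → ∀ h1 : B f ∈ (pmapCompCLM T P).domain,
      ‖(pmapCompCLM T P) ⟨B f, h1⟩‖ ≤ ‖f - P f‖ := by
  intro f hf h1
  have hdenseTP : Dense ((pmapCompCLM T P).domain : Set H) := hDdense.mono hPD
  have hfTP := mem_adjoint_domain_pmapCompCLM hanti hPsym (hDT hf)
  obtain ⟨_, hTBf, hBf⟩ := hB f hfTP
  have hnorms := norm_sq_add_norm_sq_eq_inner_of_add_adjoint_eq hdenseTP hTBf hBf
  have horth := inner_pmapCompCLM_eq_zero hanti hPsym (hPD f hf) (hPTP f hf) ⟨B f, h1⟩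
  apply norm_le_of_sq_le_inner
  rw [inner_sub_right, horth, sub_zero, ← hnorms]
  exact le_add_of_nonneg_right (sq_nonneg _)

/-- In the same setting (`T` closed antisymmetric, `P` orthogonal projection, `D ⊆ D(T)` dense
with `P(D) ⊆ D(T)`, `PTP = 0` on `D`, and `B = (I + (TP)*TP)⁻¹ (TP)*`), the operator `TB`
is defined on `D` (as `TP(Bf)`, since `PB = B`) and `‖TBf‖ ≤ ‖(I - P)f‖` for all `f ∈ D`. -/
theorem stmt5 {H : Type*} [NormedAddCommGroup H] [InnerProductSpace ℝ H] [CompleteSpace H]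
    (T : H →ₗ.[ℝ] H) (hdense : Dense (T.domain : Set H)) (hclosed : T.IsClosed)
    (hanti : ∀ f g : T.domain, ⟪T f, (g : H)⟫ = -⟪(f : H), T g⟫)
    (P : H →L[ℝ] H) (hProj : ∀ x, P (P x) = P x)
    (hPsym : ∀ x y : H, ⟪P x, y⟫ = ⟪x, P y⟫)
    (D : Submodule ℝ H) (hDT : D ≤ T.domain) (hDdense : Dense (D : Set H))
    (hPD : ∀ f (hf : f ∈ D), P f ∈ T.domain)
    (hPTP : ∀ f (hf : f ∈ D), P (T ⟨P f, hPD f hf⟩) = 0)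
    (B : H → H)
    (hB : ∀ f (hf : f ∈ (pmapCompCLM T P).adjoint.domain),
      ∃ (h1 : B f ∈ (pmapCompCLM T P).domain)
        (h2 : (pmapCompCLM T P) ⟨B f, h1⟩ ∈ (pmapCompCLM T P).adjoint.domain),
        B f + (pmapCompCLM T P).adjoint ⟨(pmapCompCLM T P) ⟨B f, h1⟩, h2⟩
          = (pmapCompCLM T P).adjoint ⟨f, hf⟩) :
    ∀ f, f ∈ D → ∀ h1 : B f ∈ (pmapCompCLM T P).domain,
      ‖(pmapCompCLM T P) ⟨B f, h1⟩‖ ≤ ‖f - P f‖ :=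
  stmt5_general T hanti P hPsym D hDT hDdense hPD hPTP B hB
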